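/- For each slant N-hedron s, the local trajectory {s_U mod σ, s mod σ, s_D mod σ} consists of three pairwise distinct flat tiles, provided N ≥ 3. -/
import Mathlib


structure Slant (N : ℕ) where
  a : Fin N → ℤ
  ρ : Equiv.Perm (Fin N)

def Slant.shift {N : ℕ} [NeZero N] (s : Slant N) : Slant N :=
  ⟨s.a + Pi.single (s.ρ 0) 1, (finRotate N).trans s.ρ⟩

def Slant.sU {n : ℕ} (s : Slant (n + 2)) : Slant (n + 2) :=
  ⟨s.a, (Equiv.swap (⟨n, by omega⟩ : Fin (n + 2)) (Fin.last (n + 1))).trans s.ρ⟩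

def Slant.sD {n : ℕ} (s : Slant (n + 2)) : Slant (n + 2) :=
  ⟨s.a + Pi.single (s.ρ 0) 1,
   (((Equiv.swap (⟨n, by omega⟩ : Fin (n + 2)) (Fin.last (n + 1))).trans
      (finRotate (n + 2)))).trans s.ρ⟩

/-- `s ~ s'` mod `σ` : `s' = σ^k(s)` for some `k ∈ ℤ`; σ-classes are the flat tiles. -/
def relσ (n : ℕ) (s s' : Slant (n + 2)) : Prop :=
  ∃ k : ℕ, Slant.shift^[k] s = s' ∨ Slant.shift^[k] s' = s

lemma sum_shift {N : ℕ} [NeZero N] (s : Slant N) :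
    ∑ i, (s.shift).a i = (∑ i, s.a i) + 1 := by
  simp [Slant.shift, Finset.sum_add_distrib, Finset.sum_pi_single']

lemma sum_iter {N : ℕ} [NeZero N] (k : ℕ) (s : Slant N) :
    ∑ i, (Slant.shift^[k] s).a i = (∑ i, s.a i) + k := by
  induction k with
  | zero => simp
  | succ k ih =>
    rw [Function.iterate_succ_apply', sum_shift, ih]
    push_cast; ring

lemma rot_n (n : ℕ) : finRotate (n + 2) ⟨n, by omega⟩ = Fin.last (n + 1) := by
  rw [finRotate_succ_apply]
  ext
  simp [Fin.add_def, Fin.last, Nat.mod_eq_of_lt]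

lemma rot_last (n : ℕ) : finRotate (n + 2) (Fin.last (n + 1)) = 0 := by
  rw [finRotate_succ_apply]
  ext
  simp [Fin.add_def, Fin.last]

lemma n_ne_last (n : ℕ) : (⟨n, by omega⟩ : Fin (n + 2)) ≠ Fin.last (n + 1) := by
  simp [Fin.ext_iff, Fin.last]

/-- For `N ≥ 3`, the local trajectory `{s_U mod σ, s mod σ, s_D mod σ}` consists of three
pairwise distinct flat tiles. -/
theorem local_trajectory_distinct (n : ℕ) (hN : 3 ≤ n + 2) (s : Slant (n + 2)) :
    ¬ relσ n s.sU s ∧ ¬ relσ n s s.sD ∧ ¬ relσ n s.sU s.sD := by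
  have hn : 1 ≤ n := by omega
  have hswap : Equiv.swap (⟨n, by omega⟩ : Fin (n + 2)) (Fin.last (n + 1))
      (⟨n, by omega⟩ : Fin (n + 2)) = Fin.last (n + 1) := Equiv.swap_apply_left _ _
  refine ⟨?_, ?_, ?_⟩
  · rintro ⟨k, h | h⟩
    all_goals {
      have hs := congrArg (fun t => ∑ i, t.a i) h
      simp only [sum_iter] at hs
      have hk : k = 0 := by
        have : (k : ℤ) = 0 := by
          simp only [Slant.sU] at hs ⊢
          omega
        exact_mod_cast this
      subst hk
      simp only [Function.iterate_zero_apply] at h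
      have hρ := congrArg (fun t => t.ρ (⟨n, by omega⟩ : Fin (n + 2))) h
      simp only [Slant.sU, Equiv.trans_apply, hswap] at hρ
      exact n_ne_last n (by
        first
        | exact (s.ρ.injective hρ).symm
        | exact s.ρ.injective hρ)
    }
  · rintro ⟨k, h | h⟩
    · have hs := congrArg (fun t => ∑ i, t.a i) h
      simp only [sum_iter, Slant.sD, Pi.add_apply, Finset.sum_add_distrib,
        Finset.sum_pi_single', Finset.mem_univ, if_true] at hs
      have hk : k = 1 := by
        have : (k : ℤ) = 1 := by omega
        exact_mod_cast this
      subst hk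
      simp only [Function.iterate_one] at h
      have hρ := congrArg (fun t => t.ρ (⟨n, by omega⟩ : Fin (n + 2))) h
      simp only [Slant.shift, Slant.sD, Equiv.trans_apply, hswap, rot_n, rot_last] at hρ
      have := s.ρ.injective hρ
      exact absurd this (by simp [Fin.ext_iff, Fin.last])
    · have hs := congrArg (fun t => ∑ i, t.a i) h
      simp only [sum_iter, Slant.sD, Pi.add_apply, Finset.sum_add_distrib,
        Finset.sum_pi_single', Finset.mem_univ, if_true] at hs
      omega
  · rintro ⟨k, h | h⟩
    · have hs := congrArg (fun t => ∑ i, t.a i) h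
      simp only [sum_iter, Slant.sU, Slant.sD, Pi.add_apply, Finset.sum_add_distrib,
        Finset.sum_pi_single', Finset.mem_univ, if_true] at hs
      have hk : k = 1 := by
        have : (k : ℤ) = 1 := by omega
        exact_mod_cast this
      subst hk
      simp only [Function.iterate_one] at h
      have hρ := congrArg (fun t => t.ρ (⟨n, by omega⟩ : Fin (n + 2))) h
      simp only [Slant.shift, Slant.sU, Slant.sD, Equiv.trans_apply, rot_n, hswap,
        Equiv.swap_apply_right, rot_last] at hρ
      -- hρ : s.ρ ⟨n,_⟩ = s.ρ 0  (modulo direction)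
      have := s.ρ.injective hρ
      have hne : (⟨n, by omega⟩ : Fin (n + 2)) ≠ (0 : Fin (n+2)) := by
        simp [Fin.ext_iff]; omega
      exact hne this
    · have hs := congrArg (fun t => ∑ i, t.a i) h
      simp only [sum_iter, Slant.sU, Slant.sD, Pi.add_apply, Finset.sum_add_distrib,
        Finset.sum_pi_single', Finset.mem_univ, if_true] at hs
      omega
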